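/- arXiv:1402.6032 — 2 statements merged into one kernel-verified Lean document; each statement's English description precedes it below -/
import Mathlib

section
/- There is no Laurent polynomial f ∈ ℂ(q)[X, X⁻¹] satisfying q⁶X⁻⁶·f(X) + f(q⁻²X) = q⁶X⁻⁵ − q²X⁻¹, where q is a transcendental element (a formal parameter). -/
open LaurentPolynomial

noncomputable section

/-- The field `ℂ(q)` with `q` a formal parameter. -/
abbrev Kq : Type := RatFunc ℂ

/-- The transcendental parameter `q`. -/
def qq : Kq := RatFunc.X

/-- Substitution `X ↦ c·X` on Laurent polynomials over `ℂ(q)`. -/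
def substScale (c : Kq) (f : LaurentPolynomial Kq) : LaurentPolynomial Kq :=
  Finsupp.sum f.coeff (fun n a => C (a * c ^ n) * T n)

/-!
Write `g = a·X^{-d}·f(X) + f(cX)` with `a`, `c` nonzero and `d > 0`. If `f ≠ 0` has lowest
exponent `M` and highest exponent `N`, the coefficient of `g` at `N` is `c^N·f_N` and at `M - d`
it is `a·f_M`, so the exponents occurring in `g` span at least `N - M + d ≥ d`. Here `d = 6`,
while the right-hand side only involves the exponents `-5` and `-1`.
-/

namespace LaurentPolynomial

variable {R : Type*} [Semiring R]

lemma coeff_C_mul_T_mul (a : R) (n k : ℤ) (f : R[T;T⁻¹]) :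
    (C a * T n * f).coeff k = a * f.coeff (k - n) := by
  rw [← single_eq_C_mul_T, AddMonoidAlgebra.coeff_single_mul_apply, neg_add_eq_sub]

lemma coeff_C_mul_T (a : R) (n k : ℤ) :
    (C a * T n).coeff k = if n = k then a else 0 := by
  rw [← single_eq_C_mul_T, AddMonoidAlgebra.coeff_single, Finsupp.single_apply]

lemma exists_coeff_ne_zero_add_le [NoZeroDivisors R] {f g : R[T;T⁻¹]} {a : R}
    {c : ℤ → R} {d : ℤ} (hd : 0 < d) (ha : a ≠ 0) (hc : ∀ k, c k ≠ 0)
    (hg : ∀ k, g.coeff k = a * f.coeff (k + d) + f.coeff k * c k) (hg0 : g ≠ 0) :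
    ∃ i j, g.coeff i ≠ 0 ∧ g.coeff j ≠ 0 ∧ i + d ≤ j := by
  have hs : f.coeff.support.Nonempty := by
    refine Finsupp.support_nonempty_iff.mpr fun hf => hg0 ?_
    ext k
    simp [hg k, hf]
  set N := f.coeff.support.max' hs
  set M := f.coeff.support.min' hs
  have hN : f.coeff N ≠ 0 := Finsupp.mem_support_iff.mp (Finset.max'_mem _ hs)
  have hM : f.coeff M ≠ 0 := Finsupp.mem_support_iff.mp (Finset.min'_mem _ hs)
  have hNd : f.coeff (N + d) = 0 :=
    Finsupp.notMem_support_iff.mp fun h => by linarith [Finset.le_max' _ _ h]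
  have hMd : f.coeff (M - d) = 0 :=
    Finsupp.notMem_support_iff.mp fun h => by linarith [Finset.min'_le _ _ h]
  refine ⟨M - d, N, ?_, ?_, by linarith [Finset.min'_le_max' _ hs]⟩
  · rw [hg, sub_add_cancel, hMd, zero_mul, add_zero]
    exact mul_ne_zero ha hM
  · rw [hg, hNd, mul_zero, zero_add]
    exact mul_ne_zero hN (hc N)

end LaurentPolynomial

lemma coeff_substScale (c : Kq) (f : LaurentPolynomial Kq) (k : ℤ) :
    (substScale c f).coeff k = f.coeff k * c ^ k := by
  unfold substScale
  simp_rw [← single_eq_C_mul_T]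
  rw [AddMonoidAlgebra.coeff_finsuppSum, Finsupp.sum_apply, Finsupp.sum_eq_single k]
  · rw [AddMonoidAlgebra.coeff_single, Finsupp.single_eq_same]
  · intro n _ hn
    rw [AddMonoidAlgebra.coeff_single, Finsupp.single_eq_of_ne' hn]
  · simp

lemma qq_ne_zero : qq ≠ 0 := RatFunc.X_ne_zero

/-- There is no Laurent polynomial `f ∈ ℂ(q)[X, X⁻¹]` with
`q⁶X⁻⁶·f(X) + f(q⁻²X) = q⁶X⁻⁵ − q²X⁻¹`. -/
theorem no_laurent_solution :
    ¬ ∃ f : LaurentPolynomial Kq,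
      C (qq ^ 6) * T (-6) * f + substScale (qq ^ (-2 : ℤ)) f
        = C (qq ^ 6) * T (-5) - C (qq ^ 2) * T (-1) := by
  rintro ⟨f, hf⟩
  set g := C (qq ^ 6) * T (-5) - C (qq ^ 2) * T (-1)
  have hg_lhs (k : ℤ) :
      g.coeff k = qq ^ 6 * f.coeff (k + 6) + f.coeff k * (qq ^ (-2 : ℤ)) ^ k := by
    rw [← hf, AddMonoidAlgebra.coeff_add, Finsupp.add_apply, coeff_C_mul_T_mul, coeff_substScale,
      sub_neg_eq_add]
  have hg_rhs (k : ℤ) :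
      g.coeff k = (if -5 = k then qq ^ 6 else 0) - (if -1 = k then qq ^ 2 else 0) := by
    rw [AddMonoidAlgebra.coeff_sub, Finsupp.sub_apply, coeff_C_mul_T, coeff_C_mul_T]
  have hg_support (k : ℤ) (hk : g.coeff k ≠ 0) : k = -5 ∨ k = -1 := by
    by_contra! h
    rw [hg_rhs, if_neg h.1.symm, if_neg h.2.symm, sub_zero] at hk
    exact hk rfl
  have hg0 : g ≠ 0 := fun h => by
    simpa [hg_rhs, qq_ne_zero] using congrArg (·.coeff (-5)) h
  obtain ⟨i, j, hi, hj, hij⟩ := exists_coeff_ne_zero_add_le (by norm_num)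
    (pow_ne_zero 6 qq_ne_zero) (fun k => zpow_ne_zero k (zpow_ne_zero _ qq_ne_zero)) hg_lhs hg0
  rcases hg_support i hi with rfl | rfl <;> rcases hg_support j hj with rfl | rfl <;> norm_num at hij

end
end

section
/- Let V = ℂ(q)[X, X⁻¹] with the sign representation: s·f(X) = −f(X⁻¹) and Y·f(X) = −f(q⁻²X). Then for every integer n, (1 − sY)·Xⁿ = Xⁿ − q^{−2n}X^{−n}, and this element is divisible by (1 − q²X²) in ℂ(q)[X, X⁻¹]; hence the operator U₀ = (1 − q²X²)⁻¹(1 − sY) preserves V. -/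
/-!
Both substitutions `X ↦ X⁻¹` and `X ↦ cX` are additive and send monomials to monomials, so
`(1 - sY)(a Xⁿ) = a (Xⁿ - q⁻²ⁿ X⁻ⁿ)` and divisibility by `1 - q²X²` need only be checked on
monomials. There `Xⁿ - q⁻²ⁿ X⁻ⁿ = Xⁿ (1 - u⁻ⁿ)` with `u = q²X²` a unit of the Laurent ring,
and `1 - u` divides `1 - uᵏ` for every integer `k`.
-/

open LaurentPolynomial

noncomputable section

/-- Substitution `X ↦ X⁻¹` on Laurent polynomials over `ℂ(q)`. -/
def substInv (f : LaurentPolynomial Kq) : LaurentPolynomial Kq :=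
  Finsupp.sum f.coeff (fun n a => C a * T (-n))

/-- The sign representation action `s·f(X) = −f(X⁻¹)`. -/
def signS (f : LaurentPolynomial Kq) : LaurentPolynomial Kq := - substInv f

/-- The sign representation action `Y·f(X) = −f(q⁻²X)`. -/
def signY (f : LaurentPolynomial Kq) : LaurentPolynomial Kq := - substScale (qq ^ (-2 : ℤ)) f

namespace LaurentPolynomial

variable {F : Type*} [Field F] {c : F}

theorem one_sub_C_mul_T_dvd_one_sub_C_zpow_mul_T (hc : c ≠ 0) (j k : ℤ) :
    (1 - C c * T j : F[T;T⁻¹]) ∣ 1 - C (c ^ k) * T (k * j) := by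
  have dvd_nat (m : ℕ) : (1 - C c * T j : F[T;T⁻¹]) ∣ 1 - C (c ^ m) * T (m * j) := by
    have h := one_sub_dvd_one_sub_pow (C c * T j) m
    rwa [mul_pow, ← map_pow, T_pow] at h
  obtain ⟨m, rfl | rfl⟩ := Int.eq_nat_or_neg k
  · simpa only [zpow_natCast] using dvd_nat m
  · have hinv : C (c ^ (-(m : ℤ))) * T (-m * j) * (C (c ^ m) * T (m * j)) = (1 : F[T;T⁻¹]) := by
      rw [mul_mul_mul_comm, ← map_mul, ← T_add, zpow_neg, zpow_natCast,
        inv_mul_cancel₀ (pow_ne_zero m hc), neg_mul, neg_add_cancel, map_one, T_zero, mul_one]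
    exact (dvd_nat m).trans
      (Dvd.intro_left (-(C (c ^ (-(m : ℤ))) * T (-m * j))) (by linear_combination hinv))

theorem one_sub_C_sq_mul_T_two_dvd (hc : c ≠ 0) (n : ℤ) :
    (1 - C (c ^ 2) * T 2 : F[T;T⁻¹]) ∣ T n - C (c ^ (-(2 * n))) * T (-n) := by
  have h : (T n - C (c ^ (-(2 * n))) * T (-n) : F[T;T⁻¹]) =
      T n * (1 - C ((c ^ 2) ^ (-n)) * T (-n * 2)) := by
    rw [mul_sub, mul_one, mul_left_comm, ← T_add, ← zpow_natCast, ← zpow_mul]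
    congr 4 <;> push_cast <;> ring
  rw [h]
  exact (one_sub_C_mul_T_dvd_one_sub_C_zpow_mul_T (pow_ne_zero 2 hc) 2 (-n)).mul_left _

end LaurentPolynomial

lemma substScale_C_mul_T (c a : Kq) (n : ℤ) : substScale c (C a * T n) = C (a * c ^ n) * T n := by
  rw [substScale, ← single_eq_C_mul_T, AddMonoidAlgebra.coeff_single, Finsupp.sum_single_index]
  simp

lemma substInv_C_mul_T (a : Kq) (n : ℤ) : substInv (C a * T n) = C a * T (-n) := by
  rw [substInv, ← single_eq_C_mul_T, AddMonoidAlgebra.coeff_single, Finsupp.sum_single_index]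
  simp

lemma substScale_add (c : Kq) (f g : LaurentPolynomial Kq) :
    substScale c (f + g) = substScale c f + substScale c g := by
  rw [substScale, substScale, substScale, AddMonoidAlgebra.coeff_add, Finsupp.sum_add_index'] <;>
    simp [add_mul]

lemma substInv_add (f g : LaurentPolynomial Kq) : substInv (f + g) = substInv f + substInv g := by
  rw [substInv, substInv, substInv, AddMonoidAlgebra.coeff_add, Finsupp.sum_add_index'] <;>
    simp [add_mul]

lemma signS_signY_C_mul_T (a : Kq) (n : ℤ) :
    signS (signY (C a * T n)) = C (a * qq ^ (-(2 * n))) * T (-n) := by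
  rw [signY, substScale_C_mul_T, ← neg_mul, ← map_neg, signS, substInv_C_mul_T, ← neg_mul,
    ← map_neg, neg_neg, ← zpow_mul, neg_mul]

lemma signS_signY_add (f g : LaurentPolynomial Kq) :
    signS (signY (f + g)) = signS (signY f) + signS (signY g) := by
  simp only [signS, signY, substScale_add, neg_add, substInv_add]

lemma one_sub_qq_sq_mul_T_two_dvd_sub_signS_signY (f : LaurentPolynomial Kq) :
    (1 - C (qq ^ 2) * T 2 : LaurentPolynomial Kq) ∣ f - signS (signY f) := by
  induction f using LaurentPolynomial.induction_on' with
  | add f g hf hg =>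
    rw [signS_signY_add, add_sub_add_comm]
    exact hf.add hg
  | C_mul_T n a =>
    rw [signS_signY_C_mul_T, map_mul, mul_assoc, ← mul_sub]
    exact (one_sub_C_sq_mul_T_two_dvd RatFunc.X_ne_zero n).mul_left _

/-- On the sign representation `V = ℂ(q)[X,X⁻¹]` of the unknot:
`(1 − sY)·Xⁿ = Xⁿ − q^{−2n}X^{−n}`, this is divisible by `1 − q²X²`, and hence the
operator `U₀ = (1 − q²X²)⁻¹(1 − sY)` preserves `V`. -/
theorem unknot_U0_preserves :
    (∀ n : ℤ,
      T n - signS (signY (T n)) = T n - C (qq ^ (-(2 * n))) * T (-n) ∧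
      (1 - C (qq ^ 2) * T 2 : LaurentPolynomial Kq) ∣
        (T n - C (qq ^ (-(2 * n))) * T (-n))) ∧
    (∀ f : LaurentPolynomial Kq, ∃ g : LaurentPolynomial Kq,
      (1 - C (qq ^ 2) * T 2) * g = f - signS (signY f)) := by
  refine ⟨fun n => ⟨?_, one_sub_C_sq_mul_T_two_dvd RatFunc.X_ne_zero n⟩, fun f => ?_⟩
  · rw [← one_mul (T n), ← map_one C, signS_signY_C_mul_T, one_mul]
  · obtain ⟨g, hg⟩ := one_sub_qq_sq_mul_T_two_dvd_sub_signS_signY f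
    exact ⟨g, hg.symm⟩

end
end
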